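/- arXiv:1408.0879 — 4 statements merged into one kernel-verified Lean document; each statement's English description precedes it below -/
import Mathlib

section
/- Let Γ be a simple graph with basepoint vertex o and let f : ℕ → ℝ be a nonnegative function. For every walk w in Γ from a vertex u to a vertex v, with u and v in the connected component of o and d(o,u) ≤ d(o,v), the Floyd length of w is at least ∑_{i=d(o,u)}^{d(o,v)−1} f(i). -/
/-!
Induct on the walk. A step from `u` to an adjacent `x` changes the distance to `o` by at most
one, so the interval `[d(o,u), d(o,v))` is covered by `min (d(o,u)) (d(o,x))` together with
`[d(o,x), d(o,v))`; the first point is paid for by the first dart, the rest by the remaining walk.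
-/

/-- The Floyd length of a walk `w` in a simple graph `Γ` with basepoint `o`, with respect
to a scaling function `f : ℕ → ℝ`: the sum over the darts `(x, y)` of `w` of
`f (min (d o x) (d o y))`, where `d` is the graph distance. -/
noncomputable def floydLength {V : Type*} (Γ : SimpleGraph V) (o : V) (f : ℕ → ℝ)
    {u v : V} (w : Γ.Walk u v) : ℝ :=
  (w.darts.map (fun d => f (min (Γ.dist o d.fst) (Γ.dist o d.snd)))).sum

open SimpleGraph Finset

theorem Finset.sum_Ico_le_add_sum_Ico {M : Type*} [AddCommMonoid M] [PartialOrder M]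
    [IsOrderedAddMonoid M] {f : ℕ → M} (hf : ∀ n, 0 ≤ f n) {a b : ℕ} (hba : b ≤ a + 1)
    (c : ℕ) : ∑ i ∈ Ico a c, f i ≤ f (min a b) + ∑ i ∈ Ico b c, f i := by
  have hsub : Ico a c ⊆ insert (min a b) (Ico b c) := by
    intro i hi
    simp only [mem_Ico, mem_insert] at hi ⊢
    omega
  calc ∑ i ∈ Ico a c, f i ≤ ∑ i ∈ insert (min a b) (Ico b c), f i :=
        sum_le_sum_of_subset_of_nonneg hsub fun i _ _ => hf i
    _ ≤ f (min a b) + ∑ i ∈ Ico b c, f i := by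
      by_cases hmem : min a b ∈ Ico b c
      · rw [insert_eq_of_mem hmem]
        exact le_add_of_nonneg_left (hf _)
      · rw [sum_insert hmem]

section

variable {V : Type*} (Γ : SimpleGraph V) (o : V) (f : ℕ → ℝ)

@[simp]
theorem floydLength_nil {u : V} : floydLength Γ o f (Walk.nil : Γ.Walk u u) = 0 := by
  simp [floydLength]

@[simp]
theorem floydLength_cons {u x v : V} (h : Γ.Adj u x) (p : Γ.Walk x v) :
    floydLength Γ o f (p.cons h) =
      f (min (Γ.dist o u) (Γ.dist o x)) + floydLength Γ o f p := by
  simp [floydLength]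

end

theorem SimpleGraph.Adj.dist_le_dist_add_one {V : Type*} {G : SimpleGraph V} {u v w : V}
    (h : G.Adj v w) : G.dist u w ≤ G.dist u v + 1 := by
  rcases h.diff_dist_adj (u := u) with _ | _ | _ <;> omega

theorem floydLength_ge_sum_general {V : Type*} (Γ : SimpleGraph V) (o : V) (f : ℕ → ℝ)
    (hf : ∀ n, 0 ≤ f n) (u v : V) (w : Γ.Walk u v) :
    ∑ i ∈ Finset.Ico (Γ.dist o u) (Γ.dist o v), f i ≤ floydLength Γ o f w := by
  induction w with
  | nil => simp
  | @cons u x v h p ih =>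
    calc ∑ i ∈ Ico (Γ.dist o u) (Γ.dist o v), f i
        ≤ f (min (Γ.dist o u) (Γ.dist o x)) + ∑ i ∈ Ico (Γ.dist o x) (Γ.dist o v), f i :=
          sum_Ico_le_add_sum_Ico hf h.dist_le_dist_add_one _
      _ ≤ floydLength Γ o f (p.cons h) := by
          rw [floydLength_cons]
          gcongr

/-- Lower bound for the Floyd length of any walk: a walk from `u` to `v` has Floyd length
at least `∑_{i = d(o,u)}^{d(o,v) - 1} f i`. -/
theorem floydLength_ge_sum {V : Type*} (Γ : SimpleGraph V) (o : V) (f : ℕ → ℝ)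
    (hf : ∀ n, 0 ≤ f n) (u v : V) (hu : Γ.Reachable o u) (hv : Γ.Reachable o v)
    (huv : Γ.dist o u ≤ Γ.dist o v) (w : Γ.Walk u v) :
    ∑ i ∈ Finset.Ico (Γ.dist o u) (Γ.dist o v), f i ≤ floydLength Γ o f w :=
  floydLength_ge_sum_general Γ o f hf u v w
end

section
/- Let F be a free group with free generating set S, let K be any subgroup of F, and let G = F *_K F be the double of F along K, i.e., the amalgamated free product (pushout) of two copies of F along the inclusion of K into each, with canonical homomorphisms ι₁, ι₂ : F → G. Let X = ι₁(S) ∪ ι₂(S) together with inverses be the symmetric generating set of G. Then for every u ∈ F, the word length of ι₁(u) in G with respect to X equals the free-group word length |u| of u with respect to S, and similarly for ι₂. In particular, ι₁ and ι₂ are injective and isometric embeddings for the word metrics. -/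
/-- The word length of `g` with respect to a generating set `X` (symmetrized, i.e.
inverses of elements of `X` are allowed as letters): the least length of a word in
`X ∪ X⁻¹` representing `g`. -/
noncomputable def wordLength {G : Type*} [Group G] (X : Set G) (g : G) : ℕ :=
  sInf {n | ∃ l : List G, (∀ x ∈ l, x ∈ X ∨ x⁻¹ ∈ X) ∧ l.length = n ∧ l.prod = g}

/-- The double `F *_K F` of the free group `F = FreeGroup α` along the subgroup `K`:
the pushout of the inclusion `K ↪ F` with itself. -/
abbrev FreeDouble {α : Type*} (K : Subgroup (FreeGroup α)) : Type _ :=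
  Monoid.PushoutI (fun _ : Bool => K.subtype)

/-- The two canonical homomorphisms `ι₁, ι₂ : F →* F *_K F` (indexed by `Bool`). -/
abbrev FreeDouble.incl {α : Type*} (K : Subgroup (FreeGroup α)) (i : Bool) :
    FreeGroup α →* FreeDouble K :=
  Monoid.PushoutI.of (φ := fun _ : Bool => K.subtype) i

/-- The symmetric generating set `X = ι₁(S) ∪ ι₂(S)` of `F *_K F`, where `S` is the
free generating set of `F`. -/
def FreeDouble.gens {α : Type*} (K : Subgroup (FreeGroup α)) : Set (FreeDouble K) :=
  Set.range (fun s : α => FreeDouble.incl K true (FreeGroup.of s)) ∪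
    Set.range (fun s : α => FreeDouble.incl K false (FreeGroup.of s))

/-! Each copy `ιᵢ F` is a retract of `F *_K F` via the fold map `F *_K F → F`, which sends
every generator in `X` to a letter. Hence the fold map is `1`-Lipschitz from the word metric
of `X` to that of `S`, while `ιᵢ` is `1`-Lipschitz the other way; composing gives equality. -/

section WordLength

variable {α G : Type*} [DecidableEq α] [Group G] {X : Set G}

theorem exists_word_prod_eq_map_length_eq_norm {f : FreeGroup α →* G}
    (hf : ∀ a, f (FreeGroup.of a) ∈ X) (u : FreeGroup α) :
    ∃ l : List G, (∀ x ∈ l, x ∈ X ∨ x⁻¹ ∈ X) ∧ l.length = u.norm ∧ l.prod = f u := by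
  refine ⟨u.toWord.map fun x => cond x.2 (f (FreeGroup.of x.1)) (f (FreeGroup.of x.1))⁻¹,
    ?_, by simp [FreeGroup.norm], ?_⟩
  · simp only [List.mem_map]
    rintro _ ⟨⟨a, (_ | _)⟩, -, rfl⟩
    · exact .inr (by simpa using hf a)
    · exact .inl (hf a)
  · rw [FreeGroup.lift_unique (f := fun a => f (FreeGroup.of a)) f fun _ => rfl,
      ← FreeGroup.lift_mk (f := fun a => f (FreeGroup.of a)), FreeGroup.mk_toWord]

theorem norm_map_prod_le_length {r : G →* FreeGroup α} (hr : ∀ x ∈ X, (r x).norm ≤ 1)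
    {l : List G} (hl : ∀ x ∈ l, x ∈ X ∨ x⁻¹ ∈ X) : (r l.prod).norm ≤ l.length := by
  induction l with
  | nil => simp
  | cons x l ih =>
    have hx : (r x).norm ≤ 1 := by
      rcases hl x List.mem_cons_self with hx | hx
      · exact hr x hx
      · simpa [FreeGroup.norm_inv_eq] using hr _ hx
    calc (r (x :: l).prod).norm ≤ (r x).norm + (r l.prod).norm := by
          rw [List.prod_cons, map_mul]; exact FreeGroup.norm_mul_le _ _
      _ ≤ 1 + l.length := add_le_add hx (ih fun y hy => hl y (List.mem_cons_of_mem x hy))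
      _ = (x :: l).length := by rw [List.length_cons, Nat.add_comm]

theorem wordLength_map_eq_norm_of_leftInverse {f : FreeGroup α →* G} {r : G →* FreeGroup α}
    (hrf : Function.LeftInverse r f) (hf : ∀ a, f (FreeGroup.of a) ∈ X)
    (hr : ∀ x ∈ X, (r x).norm ≤ 1) (u : FreeGroup α) :
    wordLength X (f u) = u.norm := by
  have hword := exists_word_prod_eq_map_length_eq_norm hf u
  refine le_antisymm (Nat.sInf_le hword) ?_
  obtain ⟨l, hl, hlen, hprod⟩ : wordLength X (f u) ∈ _ := Nat.sInf_mem ⟨_, hword⟩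
  calc u.norm = (r l.prod).norm := by rw [hprod, hrf]
    _ ≤ l.length := norm_map_prod_le_length hr hl
    _ = wordLength X (f u) := hlen

end WordLength

namespace FreeDouble

variable {α : Type*} (K : Subgroup (FreeGroup α))

noncomputable def fold : FreeDouble K →* FreeGroup α :=
  Monoid.PushoutI.lift (fun _ => MonoidHom.id _) K.subtype fun _ => rfl

theorem fold_incl (i : Bool) : Function.LeftInverse (fold K) (incl K i) := fun u => by
  simp [fold, Monoid.PushoutI.lift_of]

theorem incl_of_mem_gens (i : Bool) (a : α) : incl K i (FreeGroup.of a) ∈ gens K := by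
  cases i
  · exact .inr ⟨a, rfl⟩
  · exact .inl ⟨a, rfl⟩

theorem norm_fold_le_one [DecidableEq α] {x : FreeDouble K} (hx : x ∈ gens K) :
    (fold K x).norm ≤ 1 := by
  rcases hx with ⟨a, rfl⟩ | ⟨a, rfl⟩ <;> simp [fold_incl K _ _, FreeGroup.norm_of]

end FreeDouble

/-- Both copies of the free group `F` are isometrically embedded in the double
`G = F *_K F`: the word length of `ιᵢ u` in `G` with respect to `X` equals the
free-group word length `|u|`, and each `ιᵢ` is injective. -/
theorem freeDouble_isometric_embedding {α : Type*} [DecidableEq α]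
    (K : Subgroup (FreeGroup α)) :
    (∀ i : Bool, ∀ u : FreeGroup α,
      wordLength (FreeDouble.gens K) (FreeDouble.incl K i u) = u.norm) ∧
    (∀ i : Bool, Function.Injective (FreeDouble.incl K i)) :=
  ⟨fun i => wordLength_map_eq_norm_of_leftInverse (FreeDouble.fold_incl K i)
      (FreeDouble.incl_of_mem_gens K i) fun _ => FreeDouble.norm_fold_le_one K,
    fun i => (FreeDouble.fold_incl K i).injective⟩
end

section
/- Let α be a finite type and F the free group on α. Say that g ∈ F is a prefix of k ∈ F if the reduced word of g is an initial segment of the reduced word of k. Let (K_n)_{n∈ℕ} be an increasing sequence of subgroups of F and (h_n)_{n≥1} a sequence of elements of F such that for every n: (i) h_{n+1} is a prefix of some element of K_{n+1}; (ii) h_{n+1} is not a prefix of any element of K_n; and (iii) for every g ∈ F that is not a prefix of any element of K_n one has |h_{n+1}| ≤ |g| + 1. Then every element of F is a prefix of some element of ⋃_n K_n. -/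
/-!
If `g` were a prefix of no element of `⋃ n, K n`, hypothesis (iii) would bound every `|h (n+1)|`
by `|g| + 1`. But the `h (n+1)` are pairwise distinct: for `m < n`, `h (m+1)` is a prefix of an
element of `K (m+1) ≤ K n` while `h (n+1)` is not. A free group of finite rank has only finitely
many elements of bounded length, a contradiction.
-/

/-- `g` is a *prefix* of `k` in the free group if the reduced word of `g` is an initial
segment of the reduced word of `k`, i.e. `g` lies on the geodesic from `1` to `k`. -/
def FreeGroup.IsPrefix {α : Type*} [DecidableEq α] (g k : FreeGroup α) : Prop :=
  g.toWord <+: k.toWord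

theorem FreeGroup.finite_setOf_norm_le {α : Type*} [Finite α] [DecidableEq α] (N : ℕ) :
    {x : FreeGroup α | x.norm ≤ N}.Finite :=
  (List.finite_length_le (α × Bool) N).preimage FreeGroup.toWord_injective.injOn

theorem Function.injective_of_mem_succ_of_notMem {β : Type*} {S : ℕ → Set β} (hS : Monotone S)
    {f : ℕ → β} (hf_mem : ∀ n, f n ∈ S (n + 1)) (hf_notMem : ∀ n, f n ∉ S n) :
    Function.Injective f := by
  have hne : ∀ m n, m < n → f m ≠ f n := fun m n hmn hfmn =>
    hf_notMem n (hfmn ▸ hS (Nat.succ_le_of_lt hmn) (hf_mem m))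
  intro m n hfmn
  rcases lt_trichotomy m n with hlt | heq | hgt
  · exact absurd hfmn (hne m n hlt)
  · exact heq
  · exact absurd hfmn.symm (hne n m hgt)

/-- If `(K n)` is an increasing sequence of subgroups of a finitely generated free
group and the elements `h (n+1)` are prefix-minimizers: each `h (n+1)` is a prefix of
an element of `K (n+1)` but of no element of `K n`, and `|h (n+1)| ≤ |g| + 1` for
every `g` that is not a prefix of any element of `K n`, then every element of the
free group is a prefix of some element of `⋃ n, K n`. -/
theorem every_element_prefix_of_union {α : Type*} [Fintype α] [DecidableEq α]
    (K : ℕ → Subgroup (FreeGroup α)) (hK : Monotone K) (h : ℕ → FreeGroup α)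
    (h1 : ∀ n : ℕ, ∃ k ∈ K (n + 1), (h (n + 1)).IsPrefix k)
    (h2 : ∀ n : ℕ, ¬ ∃ k ∈ K n, (h (n + 1)).IsPrefix k)
    (h3 : ∀ n : ℕ, ∀ g : FreeGroup α,
      (¬ ∃ k ∈ K n, g.IsPrefix k) → (h (n + 1)).norm ≤ g.norm + 1) :
    ∀ g : FreeGroup α, ∃ n : ℕ, ∃ k ∈ K n, g.IsPrefix k := by
  intro g
  by_contra! hg
  let prefixes : ℕ → Set (FreeGroup α) := fun n => {x | ∃ k ∈ K n, x.IsPrefix k}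
  have hprefixes : Monotone prefixes := fun m n hmn x ⟨k, hk, hxk⟩ => ⟨k, hK hmn hk, hxk⟩
  have hinj : Function.Injective (fun n => h (n + 1)) :=
    Function.injective_of_mem_succ_of_notMem hprefixes h1 h2
  have hbounded : Set.range (fun n => h (n + 1)) ⊆ {x | x.norm ≤ g.norm + 1} := by
    rintro _ ⟨n, rfl⟩
    exact h3 n g fun ⟨k, hk, hgk⟩ => hg n k hk hgk
  exact (Set.infinite_range_of_injective hinj).mono hbounded
    (FreeGroup.finite_setOf_norm_le (g.norm + 1))
end

section
/- Let α be a type and (R_n)_{n∈ℕ} an increasing sequence of subsets of the free group on α. Let G be the group presented by generators α and relators ⋃_n R_n, let G_n be the group presented by generators α and relators R_n, and let p_n : G_n → G be the natural surjective homomorphism (induced by the identity on the free group, which exists since R_n ⊆ ⋃_m R_m). Let H be a finitely presented group (i.e., H is isomorphic to a presented group with finitely many generators and finitely many relators) and let φ : H → G be any group homomorphism. Then there exist n ∈ ℕ and a homomorphism ψ : H → G_n with p_n ∘ ψ = φ. In particular, if φ is injective then ψ is injective, so every finitely presented subgroup of G embeds into some G_n. -/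
/-!
Send the generators of `H` to words in the free group on `α` lifting their images in `G`. The
finitely many relators of `H` then go into the kernel of `FreeGroup α → G`, the normal closure of
`⋃ n, R n`; since the `R n` increase, this kernel is the union of the normal closures of the `R n`,
so all those images already lie in one of them and the map factors through `G_n`. A lift of an
injective map is injective.
-/

/-- The natural homomorphism `G_n = ⟨α ∣ R n⟩ →* G = ⟨α ∣ ⋃ m, R m⟩` induced by the
identity of the free group (it exists since `R n ⊆ ⋃ m, R m`). It is surjective. -/
def presentedGroupProj {α : Type*} (R : ℕ → Set (FreeGroup α)) (n : ℕ) :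
    PresentedGroup (R n) →* PresentedGroup (⋃ m, R m) :=
  PresentedGroup.toGroup (f := fun a => (PresentedGroup.of a : PresentedGroup (⋃ m, R m)))
    (fun r hr => by
      have hlift : (FreeGroup.lift fun a => (PresentedGroup.of a :
          PresentedGroup (⋃ m, R m))) r = PresentedGroup.mk (⋃ m, R m) r := by
        congr 1
        ext a
        rfl
      rw [hlift]
      exact (QuotientGroup.eq_one_iff r).mpr
        (Subgroup.subset_normalClosure (Set.mem_iUnion.mpr ⟨n, hr⟩)))

namespace Subgroup

variable {G : Type*} [Group G] {ι : Type*}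

theorem normalClosure_iUnion (s : ι → Set G) :
    normalClosure (⋃ i, s i) = ⨆ i, normalClosure (s i) :=
  le_antisymm
    (normalClosure_le_normal <| Set.iUnion_subset fun i =>
      subset_normalClosure.trans (le_iSup (fun i => normalClosure (s i)) i))
    (iSup_le fun i => normalClosure_mono (Set.subset_iUnion s i))

theorem coe_normalClosure_iUnion_of_directed [Nonempty ι] {s : ι → Set G}
    (hs : Directed (· ⊆ ·) s) :
    (normalClosure (⋃ i, s i) : Set G) = ⋃ i, (normalClosure (s i) : Set G) := by
  rw [normalClosure_iUnion]
  exact coe_iSup_of_directed (hs.mono_comp (g := normalClosure) _ fun _ _ => normalClosure_mono)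

theorem exists_subset_normalClosure_of_directed [Nonempty ι] {s : ι → Set G}
    (hs : Directed (· ⊆ ·) s) {t : Set G} (ht : t.Finite)
    (hts : t ⊆ normalClosure (⋃ i, s i)) : ∃ i, t ⊆ normalClosure (s i) := by
  have hdir : Directed (· ⊆ ·) fun i => (normalClosure (s i) : Set G) :=
    hs.mono_comp (g := fun t => (normalClosure t : Set G)) _ fun _ _ => normalClosure_mono
  rw [coe_normalClosure_iUnion_of_directed hs, ← ht.coe_toFinset] at hts
  simpa using hdir.exists_mem_subset_of_finset_subset_biUnion hts

end Subgroup

namespace PresentedGroup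

variable {α β ι : Type*}

theorem exists_freeGroup_lift {rels : Set (FreeGroup β)} {t : Set (FreeGroup α)}
    (φ : PresentedGroup rels →* PresentedGroup t) :
    ∃ F : FreeGroup β →* FreeGroup α, (mk t).comp F = φ.comp (mk rels) := by
  choose f hf using fun b => mk_surjective t (φ (of b))
  exact ⟨FreeGroup.lift f, FreeGroup.ext_hom _ _ fun b => by simpa [of] using hf b⟩

theorem exists_lift_of_directed [Nonempty ι] {rels : Set (FreeGroup β)} (hrels : rels.Finite)
    {s : ι → Set (FreeGroup α)} (hs : Directed (· ⊆ ·) s)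
    (φ : PresentedGroup rels →* PresentedGroup (⋃ i, s i)) :
    ∃ i, ∃ ψ : PresentedGroup rels →* PresentedGroup (s i),
      (PresentedGroup.map (.id _) fun _ => Set.mem_iUnion_of_mem i).comp ψ = φ := by
  obtain ⟨F, hF⟩ := exists_freeGroup_lift φ
  have hker : F '' rels ⊆ Subgroup.normalClosure (⋃ i, s i) := by
    rintro _ ⟨r, hr, rfl⟩
    rw [SetLike.mem_coe, ← mk_eq_one_iff, ← MonoidHom.comp_apply, hF, MonoidHom.comp_apply,
      one_of_mem hr, map_one]
  obtain ⟨i, hi⟩ := Subgroup.exists_subset_normalClosure_of_directed hs (hrels.image F) hker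
  refine ⟨i, QuotientGroup.map _ _ F
    (Subgroup.normalClosure_le_normal fun r hr => hi ⟨r, hr, rfl⟩), ?_⟩
  exact QuotientGroup.monoidHom_ext _ hF

end PresentedGroup

theorem presentedGroupProj_eq_map {α : Type*} (R : ℕ → Set (FreeGroup α)) (n : ℕ) :
    presentedGroupProj R n = PresentedGroup.map (.id _) fun _ => Set.mem_iUnion_of_mem n :=
  PresentedGroup.ext fun _ => PresentedGroup.toGroup.of _

/-- Every homomorphism from a finitely presented group `H` to the direct limit
`G = ⟨α ∣ ⋃ n, R n⟩` of an increasing sequence of presentations lifts to some stage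
`G_n = ⟨α ∣ R n⟩`; moreover the lift is injective if the original map is. In
particular every finitely presented subgroup of `G` embeds into some `G_n`. -/
theorem finitelyPresented_hom_lifts {α : Type*} (R : ℕ → Set (FreeGroup α))
    (hR : Monotone R) {H : Type*} [Group H]
    (hfp : ∃ (β : Type) (_ : Finite β) (rels : Finset (FreeGroup β)),
      Nonempty (H ≃* PresentedGroup (rels : Set (FreeGroup β))))
    (φ : H →* PresentedGroup (⋃ m, R m)) :
    ∃ (n : ℕ) (ψ : H →* PresentedGroup (R n)),
      (presentedGroupProj R n).comp ψ = φ ∧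
        (Function.Injective φ → Function.Injective ψ) := by
  obtain ⟨β, -, rels, ⟨e⟩⟩ := hfp
  obtain ⟨n, ψ, hψ⟩ := PresentedGroup.exists_lift_of_directed rels.finite_toSet hR.directed_le
    (φ.comp e.symm.toMonoidHom)
  have hlift : (presentedGroupProj R n).comp (ψ.comp e.toMonoidHom) = φ := by
    rw [presentedGroupProj_eq_map, ← MonoidHom.comp_assoc, hψ]
    ext
    simp
  exact ⟨n, ψ.comp e.toMonoidHom, hlift, fun hφ => .of_comp (f := presentedGroupProj R n)
    (by rwa [← MonoidHom.coe_comp, hlift])⟩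
end
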